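/- Let 0 = n₀ < n₁ < ⋯ < n_k = n be a block decomposition, β > 0, ν < 0, E ≥ 0, Δ > 0 and ε ∈ (0,1). Set c = Δ/D(ν,β), and assume ν + c < 0 and D(ν + c, β) ≤ (2 − ε)·D(ν,β). Then the number of configurations M with ∑ i, (M i)·λ i ≤ E and ∑_{l=1}^{k} |S_l(M) − ψ_l(ν,β)| ≥ Δ is at most 2^k · ζ(ν,β) · exp(β·E − ν·N) · exp(−ε·Δ²/(2·D(ν,β))). -/

import Mathlib

open Finset

noncomputable section

/-- The finite set of configurations: functions `M : Fin n → ℕ` with `∑ i, M i = N`. -/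
def Omega (n N : ℕ) : Finset (Fin n → ℕ) := Finset.Nat.antidiagonalTuple n N

/-- The energy `∑ i, (M i) · λ i` of a configuration. -/
def energy {n : ℕ} (lam : Fin n → ℝ) (M : Fin n → ℕ) : ℝ := ∑ i, (M i : ℝ) * lam i

/-- Block `l` of the decomposition `0 = n₀ < n₁ < ⋯ < n_k = n`. -/
def block (n k : ℕ) (nb : Fin (k + 1) → ℕ) (l : Fin k) : Finset (Fin n) :=
  Finset.univ.filter fun i => nb l.castSucc ≤ (i : ℕ) ∧ (i : ℕ) < nb l.succ

/-- `S_l(M)`: the number of elements of the configuration falling into block `l`. -/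
def blockSum {n k : ℕ} (nb : Fin (k + 1) → ℕ) (M : Fin n → ℕ) (l : Fin k) : ℕ :=
  ∑ i ∈ block n k nb l, M i

/-- `ψ_l(ν, β) = ∑_{i ∈ block l} (exp(β λ i − ν) − 1)⁻¹`. -/
def psiBlock {n k : ℕ} (lam : Fin n → ℝ) (nb : Fin (k + 1) → ℕ) (l : Fin k) (ν β : ℝ) : ℝ :=
  ∑ i ∈ block n k nb l, (Real.exp (β * lam i - ν) - 1)⁻¹

/-- `ζ(ν, β) = ∏_i (1 − exp(ν − β λ i))⁻¹`. -/
def zeta {n : ℕ} (lam : Fin n → ℝ) (ν β : ℝ) : ℝ :=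
  ∏ i, (1 - Real.exp (ν - β * lam i))⁻¹

/-- `D(ν, β) = ∑_i exp(β λ i − ν)/(exp(β λ i − ν) − 1)²`. -/
def Dfun {n : ℕ} (lam : Fin n → ℝ) (ν β : ℝ) : ℝ :=
  ∑ i, Real.exp (β * lam i - ν) / (Real.exp (β * lam i - ν) - 1) ^ 2

/-!
Split the configurations according to the sign pattern `σ ∈ {±1}ᵏ` of the block deviations
`S_l − ψ_l`; this costs the factor `2ᵏ`. For a fixed pattern, tilt by `β` on the energy and by
`c σ_l` on block `l` (a Chernoff bound): summed over `Ω(N)`, the tilted weights are at most a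
product of geometric series `∏ᵢ (1 − e^{ν + c σ_l − β λᵢ})⁻¹`. Each factor is compared with the
corresponding factor of `ζ(ν, β)` by a second-order Taylor bound for `t ↦ −log (1 − e^{−t})`,
whose second derivative `eᵗ/(eᵗ − 1)²` is decreasing, so the remainder is controlled by
`D(ν + c, β)`. With `c = Δ / D(ν, β)` and `D(ν + c, β) ≤ (2 − ε) D(ν, β)` the exponent becomes
`−ε Δ² / (2 D(ν, β))`.
-/

open Real

theorem ConvexOn.add_mul_sub_le_of_hasDerivAt {S : Set ℝ} {f : ℝ → ℝ} {f' x y : ℝ}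
    (hf : ConvexOn ℝ S f) (hx : x ∈ S) (hy : y ∈ S) (hf' : HasDerivAt f f' x) :
    f x + f' * (y - x) ≤ f y := by
  rcases lt_trichotomy x y with hxy | rfl | hxy
  · have h := hf.le_slope_of_hasDerivAt hx hy hxy hf'
    rw [slope_def_field, le_div_iff₀ (sub_pos.2 hxy)] at h
    linarith
  · simp
  · have h := hf.slope_le_of_hasDerivAt hy hx hxy hf'
    rw [slope_def_field, div_le_iff₀ (sub_pos.2 hxy)] at h
    linarith

/-- `log ∑ₘ e^{-m t}`, the log-partition function of a single bosonic mode at level `t > 0`. -/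
def logBose (t : ℝ) : ℝ := -log (1 - exp (-t))

def boseMean (t : ℝ) : ℝ := (exp t - 1)⁻¹

def boseVariance (t : ℝ) : ℝ := exp t / (exp t - 1) ^ 2

lemma exp_logBose {t : ℝ} (ht : 0 < t) : exp (logBose t) = (1 - exp (-t))⁻¹ := by
  have : exp (-t) < 1 := exp_lt_one_iff.2 (neg_lt_zero.2 ht)
  rw [logBose, exp_neg, exp_log (by linarith)]

lemma hasDerivAt_logBose {t : ℝ} (ht : 0 < t) : HasDerivAt logBose (-boseMean t) t := by
  have h1 : 1 < exp t := one_lt_exp_iff.2 ht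
  have h := (((hasDerivAt_neg t).exp).const_sub 1).log
    (by rw [exp_neg]; exact (sub_pos.2 (inv_lt_one_of_one_lt₀ h1)).ne')
  refine h.neg.congr_deriv ?_
  rw [boseMean, exp_neg]
  field_simp

lemma hasDerivAt_boseMean {t : ℝ} (ht : 0 < t) : HasDerivAt boseMean (-boseVariance t) t := by
  have h1 : 1 < exp t := one_lt_exp_iff.2 ht
  refine (((hasDerivAt_exp t).sub_const 1).inv (by linarith)).congr_deriv ?_
  rw [boseVariance, neg_div]

lemma boseVariance_nonneg (t : ℝ) : 0 ≤ boseVariance t := by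
  unfold boseVariance; positivity

lemma antitoneOn_boseVariance : AntitoneOn boseVariance (Set.Ioi 0) := by
  intro x hx y hy hxy
  have hx1 : 1 < exp x := one_lt_exp_iff.2 hx
  have hxy' : exp x ≤ exp y := exp_le_exp.2 hxy
  rw [boseVariance, boseVariance, div_le_div_iff₀ (by nlinarith) (by nlinarith)]
  nlinarith [mul_nonneg (sub_nonneg.2 hxy') (sub_nonneg.2 (show 1 ≤ exp x * exp y by nlinarith))]

lemma hasDerivAt_sq_mul_sub_logBose (K : ℝ) {t : ℝ} (ht : 0 < t) :
    HasDerivAt (fun t => K * t ^ 2 / 2 - logBose t) (K * t + boseMean t) t :=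
  ((((hasDerivAt_pow 2 t).const_mul K).div_const 2).fun_sub (hasDerivAt_logBose ht)).congr_deriv
    (by push_cast; ring)

lemma convexOn_sq_mul_sub_logBose {b : ℝ} (hb : 0 < b) :
    ConvexOn ℝ (Set.Ici b) (fun t => boseVariance b * t ^ 2 / 2 - logBose t) := by
  refine convexOn_of_hasDerivWithinAt2_nonneg (convex_Ici b)
    (f' := fun t => boseVariance b * t + boseMean t)
    (f'' := fun t => boseVariance b - boseVariance t) ?_ ?_ ?_ ?_
  · exact fun t ht =>
      (hasDerivAt_sq_mul_sub_logBose _ (hb.trans_le ht)).continuousAt.continuousWithinAt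
  · rw [interior_Ici]
    exact fun t ht => (hasDerivAt_sq_mul_sub_logBose _ (hb.trans ht)).hasDerivWithinAt
  · rw [interior_Ici]
    exact fun t ht => ((((hasDerivAt_id t).const_mul _).fun_add
      (hasDerivAt_boseMean (hb.trans ht))).congr_deriv (by simp [sub_eq_add_neg])).hasDerivWithinAt
  · rw [interior_Ici]
    exact fun t ht => sub_nonneg.2 (antitoneOn_boseVariance hb (hb.trans ht) ht.le)

lemma logBose_sub_le {a s c : ℝ} (hs : |s| ≤ c) (hca : c < a) :
    logBose (a - s) ≤ logBose a + s * boseMean a + c ^ 2 * boseVariance (a - c) / 2 := by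
  have hb : 0 < a - c := sub_pos.2 hca
  have hsc := abs_le.1 hs
  have h := (convexOn_sq_mul_sub_logBose hb).add_mul_sub_le_of_hasDerivAt
    (x := a) (y := a - s) (by simp; linarith) (by simp; linarith)
    (hasDerivAt_sq_mul_sub_logBose _ (by linarith))
  have hs2 : s ^ 2 ≤ c ^ 2 := sq_le_sq' hsc.1 hsc.2
  nlinarith [boseVariance_nonneg (a - c)]

lemma Dfun_eq_sum_boseVariance {n : ℕ} (lam : Fin n → ℝ) (ν β : ℝ) :
    Dfun lam ν β = ∑ i, boseVariance (β * lam i - ν) := rfl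

lemma Dfun_nonneg {n : ℕ} (lam : Fin n → ℝ) (ν β : ℝ) : 0 ≤ Dfun lam ν β :=
  sum_nonneg fun _ _ => boseVariance_nonneg _

lemma zeta_nonneg {n : ℕ} {lam : Fin n → ℝ} {ν β : ℝ} (h : ∀ i, ν ≤ β * lam i) :
    0 ≤ zeta lam ν β :=
  prod_nonneg fun i _ => inv_nonneg.2 (sub_nonneg.2 (exp_le_one_iff.2 (by linarith [h i])))

lemma prod_inv_one_sub_exp_le {n : ℕ} (lam w : Fin n → ℝ) {ν β c : ℝ}
    (hw : ∀ i, |w i| ≤ c) (hc : ∀ i, c < β * lam i - ν) :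
    ∏ i, (1 - exp (ν + w i - β * lam i))⁻¹ ≤
      zeta lam ν β *
        exp (∑ i, w i * boseMean (β * lam i - ν) + c ^ 2 * Dfun lam (ν + c) β / 2) := by
  have hw' : ∀ i, 0 < β * lam i - ν - w i := fun i => by linarith [hc i, (abs_le.1 (hw i)).2]
  have hpos : ∀ i, 0 < β * lam i - ν := fun i => by linarith [hc i, (abs_nonneg _).trans (hw i)]
  have hprod : ∏ i, (1 - exp (ν + w i - β * lam i))⁻¹ =
      exp (∑ i, logBose (β * lam i - ν - w i)) := by
    rw [exp_sum]
    exact prod_congr rfl fun i _ => by rw [exp_logBose (hw' i)]; ring_nf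
  have hzeta : zeta lam ν β = exp (∑ i, logBose (β * lam i - ν)) := by
    rw [exp_sum, zeta]
    exact prod_congr rfl fun i _ => by rw [exp_logBose (hpos i), neg_sub]
  rw [hprod, hzeta, ← exp_add, exp_le_exp, Dfun_eq_sum_boseVariance, mul_sum, sum_div,
    ← sum_add_distrib, ← sum_add_distrib]
  refine sum_le_sum fun i _ => ?_
  rw [show β * lam i - (ν + c) = β * lam i - ν - c by ring]
  linarith [logBose_sub_le (hw i) (hc i)]

lemma sum_Omega_prod_pow_le {n : ℕ} (N : ℕ) (r : Fin n → ℝ) (h0 : ∀ i, 0 ≤ r i)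
    (h1 : ∀ i, r i < 1) :
    ∑ M ∈ Omega n N, ∏ i, r i ^ M i ≤ ∏ i, (1 - r i)⁻¹ := by
  have hsub : Omega n N ⊆ Fintype.piFinset fun _ => range (N + 1) := by
    intro M hM
    rw [Omega, Nat.mem_antidiagonalTuple] at hM
    simp only [Fintype.mem_piFinset, Finset.mem_range, Nat.lt_succ_iff, ← hM]
    exact fun i => single_le_sum (f := M) (fun _ _ => Nat.zero_le _) (mem_univ i)
  calc ∑ M ∈ Omega n N, ∏ i, r i ^ M i
      ≤ ∑ M ∈ Fintype.piFinset (fun _ => range (N + 1)), ∏ i, r i ^ M i :=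
        sum_le_sum_of_subset_of_nonneg hsub fun M _ _ => prod_nonneg fun i _ => pow_nonneg (h0 i) _
    _ = ∏ i, ∑ m ∈ range (N + 1), r i ^ m := (prod_univ_sum _ _).symm
    _ ≤ ∏ i, (1 - r i)⁻¹ := by
        refine prod_le_prod (fun i _ => sum_nonneg fun m _ => pow_nonneg (h0 i) m) fun i _ => ?_
        have h := geom_sum_Ico_le_of_lt_one (m := 0) (n := N + 1) (h0 i) (h1 i)
        rwa [← range_eq_Ico, pow_zero, one_div] at h

lemma card_filter_le_exp_mul_prod {n : ℕ} (N : ℕ) (lam w : Fin n → ℝ) {β ν E T : ℝ} (hβ : 0 ≤ β)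
    (hr : ∀ i, ν + w i - β * lam i < 0) :
    (((Omega n N).filter fun M => energy lam M ≤ E ∧ T ≤ ∑ i, w i * M i).card : ℝ) ≤
      exp (β * E - ν * N - T) * ∏ i, (1 - exp (ν + w i - β * lam i))⁻¹ := by
  set r : Fin n → ℝ := fun i => exp (ν + w i - β * lam i)
  have hone : ∀ M ∈ (Omega n N).filter fun M => energy lam M ≤ E ∧ T ≤ ∑ i, w i * M i,
      1 ≤ exp (β * E - ν * N - T) * ∏ i, r i ^ M i := by
    intro M hM
    obtain ⟨hMΩ, hME, hMT⟩ := mem_filter.1 hM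
    have hN : ∑ i, (M i : ℝ) = N := by exact_mod_cast Nat.mem_antidiagonalTuple.1 hMΩ
    have hsum : ∑ i, (M i : ℝ) * (ν + w i - β * lam i) =
        ν * N + ∑ i, w i * M i - β * energy lam M := by
      rw [energy, ← hN, mul_sum, mul_sum, ← sum_add_distrib, ← sum_sub_distrib]
      exact sum_congr rfl fun i _ => by ring
    have hprod : ∏ i, r i ^ M i = exp (∑ i, (M i : ℝ) * (ν + w i - β * lam i)) := by
      rw [exp_sum]
      exact prod_congr rfl fun i _ => (exp_nat_mul _ _).symm
    rw [hprod, ← exp_add, hsum]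
    exact one_le_exp (by nlinarith)
  calc (((Omega n N).filter fun M => energy lam M ≤ E ∧ T ≤ ∑ i, w i * M i).card : ℝ)
      = ∑ M ∈ (Omega n N).filter fun M => energy lam M ≤ E ∧ T ≤ ∑ i, w i * M i, (1 : ℝ) := by
        simp
    _ ≤ ∑ M ∈ Omega n N, exp (β * E - ν * N - T) * ∏ i, r i ^ M i :=
        (sum_le_sum hone).trans (sum_le_sum_of_subset_of_nonneg (filter_subset _ _)
          fun M _ _ => by positivity)
    _ ≤ exp (β * E - ν * N - T) * ∏ i, (1 - r i)⁻¹ := by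
        rw [← mul_sum]
        exact mul_le_mul_of_nonneg_left
          (sum_Omega_prod_pow_le N r (fun i => (exp_pos _).le) fun i => exp_lt_one_iff.2 (hr i))
          (exp_pos _).le

section Blocks

variable {n k : ℕ} (nb : Fin (k + 1) → ℕ)

def blockWeight (σ : Fin k → ℝ) (i : Fin n) : ℝ :=
  ∑ l, if i ∈ block n k nb l then σ l else 0

lemma sum_blockWeight_mul (σ : Fin k → ℝ) (x : Fin n → ℝ) :
    ∑ i, blockWeight nb σ i * x i = ∑ l, σ l * ∑ i ∈ block n k nb l, x i := by
  simp only [blockWeight, sum_mul, ite_mul, zero_mul, mul_sum]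
  rw [sum_comm]
  exact sum_congr rfl fun l _ => by rw [sum_ite_mem, univ_inter]

variable {nb}

lemma eq_of_mem_block (hmono : Monotone nb) {i : Fin n} {l l' : Fin k}
    (h : i ∈ block n k nb l) (h' : i ∈ block n k nb l') : l = l' := by
  have hnot : ∀ {l l' : Fin k}, i ∈ block n k nb l → i ∈ block n k nb l' → ¬ l < l' := by
    intro l l' h h' hlt
    simp only [block, mem_filter, mem_univ, true_and] at h h'
    have := hmono (Fin.succ_le_castSucc_iff.2 hlt)
    omega
  exact le_antisymm (not_lt.1 (hnot h' h)) (not_lt.1 (hnot h h'))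

lemma abs_blockWeight_le_one (hmono : Monotone nb) {σ : Fin k → ℝ} (hσ : ∀ l, |σ l| ≤ 1)
    (i : Fin n) : |blockWeight nb σ i| ≤ 1 := by
  rw [blockWeight, ← sum_filter]
  have hcard : (univ.filter fun l => i ∈ block n k nb l).card ≤ 1 :=
    card_le_one.2 fun l hl l' hl' => eq_of_mem_block hmono (mem_filter.1 hl).2 (mem_filter.1 hl').2
  calc |∑ l ∈ univ.filter fun l => i ∈ block n k nb l, σ l|
      ≤ ∑ l ∈ univ.filter fun l => i ∈ block n k nb l, |σ l| := abs_sum_le_sum_abs _ _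
    _ ≤ (univ.filter fun l => i ∈ block n k nb l).card := by
        simpa using sum_le_sum fun l (_ : l ∈ univ.filter fun l => i ∈ block n k nb l) => hσ l
    _ ≤ 1 := by exact_mod_cast hcard

end Blocks

theorem card_filter_signed_block_deviation_le {n N k : ℕ} (lam : Fin n → ℝ) (hlam : ∀ i, 0 ≤ lam i)
    {nb : Fin (k + 1) → ℕ} (hmono : Monotone nb) {σ : Fin k → ℝ} (hσ : ∀ l, |σ l| ≤ 1)
    {β ν E Δ c : ℝ} (hβ : 0 ≤ β) (hc : 0 ≤ c) (hνc : ν + c < 0) :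
    (((Omega n N).filter fun M => energy lam M ≤ E ∧
        Δ ≤ ∑ l, σ l * ((blockSum nb M l : ℝ) - psiBlock lam nb l ν β)).card : ℝ) ≤
      zeta lam ν β * exp (β * E - ν * N) * exp (-c * Δ + c ^ 2 * Dfun lam (ν + c) β / 2) := by
  set w : Fin n → ℝ := fun i => c * blockWeight nb σ i
  set Ψ := ∑ l, σ l * psiBlock lam nb l ν β
  have hw : ∀ i, |w i| ≤ c := fun i => by
    rw [abs_mul, abs_of_nonneg hc]
    exact mul_le_of_le_one_right hc (abs_blockWeight_le_one hmono hσ i)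
  have hca : ∀ i, c < β * lam i - ν := fun i => by nlinarith [mul_nonneg hβ (hlam i)]
  have hsub : ((Omega n N).filter fun M => energy lam M ≤ E ∧
        Δ ≤ ∑ l, σ l * ((blockSum nb M l : ℝ) - psiBlock lam nb l ν β)) ⊆
      (Omega n N).filter fun M => energy lam M ≤ E ∧ c * (Δ + Ψ) ≤ ∑ i, w i * M i := by
    intro M hM
    obtain ⟨hMΩ, hME, hMΔ⟩ := mem_filter.1 hM
    refine mem_filter.2 ⟨hMΩ, hME, ?_⟩
    have hwM : ∑ i, w i * M i = c * ∑ l, σ l * (blockSum nb M l : ℝ) := by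
      simp only [w, mul_assoc, ← mul_sum, sum_blockWeight_mul, blockSum, Nat.cast_sum]
    rw [hwM]
    simp only [mul_sub, sum_sub_distrib] at hMΔ
    exact mul_le_mul_of_nonneg_left (by linarith) hc
  have hψ : ∑ i, w i * boseMean (β * lam i - ν) = c * Ψ := by
    simp only [w, mul_assoc, ← mul_sum, sum_blockWeight_mul]
    rfl
  calc _ ≤ (((Omega n N).filter fun M =>
          energy lam M ≤ E ∧ c * (Δ + Ψ) ≤ ∑ i, w i * M i).card : ℝ) := by
        exact_mod_cast card_le_card hsub
    _ ≤ exp (β * E - ν * N - c * (Δ + Ψ)) * ∏ i, (1 - exp (ν + w i - β * lam i))⁻¹ :=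
        card_filter_le_exp_mul_prod N lam w hβ fun i => by
          linarith [(abs_le.1 (hw i)).2, mul_nonneg hβ (hlam i)]
    _ ≤ exp (β * E - ν * N - c * (Δ + Ψ)) *
          (zeta lam ν β * exp (c * Ψ + c ^ 2 * Dfun lam (ν + c) β / 2)) := by
        rw [← hψ]
        exact mul_le_mul_of_nonneg_left (prod_inv_one_sub_exp_le lam w hw hca) (exp_pos _).le
    _ = zeta lam ν β * exp (β * E - ν * N) * exp (-c * Δ + c ^ 2 * Dfun lam (ν + c) β / 2) := by
        rw [mul_left_comm, mul_assoc, ← exp_add, ← exp_add]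
        ring_nf

lemma card_filter_le_sum_card_filter_signs {α : Type*} [DecidableEq α] {k : ℕ} (s : Finset α)
    (p : α → Prop) [DecidablePred p] (x : α → Fin k → ℝ) (Δ : ℝ) :
    ((s.filter fun a => p a ∧ Δ ≤ ∑ l, |x a l|).card : ℝ) ≤
      ∑ σ ∈ Fintype.piFinset fun _ => ({-1, 1} : Finset ℝ),
        ((s.filter fun a => p a ∧ Δ ≤ ∑ l, σ l * x a l).card : ℝ) := by
  have hcover : (s.filter fun a => p a ∧ Δ ≤ ∑ l, |x a l|) ⊆
      (Fintype.piFinset fun _ => ({-1, 1} : Finset ℝ)).biUnion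
        fun σ => s.filter fun a => p a ∧ Δ ≤ ∑ l, σ l * x a l := by
    intro a ha
    obtain ⟨has, hpa, hΔ⟩ := mem_filter.1 ha
    refine mem_biUnion.2 ⟨fun l => if 0 ≤ x a l then 1 else -1, ?_, mem_filter.2 ⟨has, hpa, ?_⟩⟩
    · simp only [Fintype.mem_piFinset]
      intro l; split_ifs <;> simp
    · refine hΔ.trans_eq (sum_congr rfl fun l _ => ?_)
      dsimp only
      split_ifs with h
      · rw [abs_of_nonneg h, one_mul]
      · rw [abs_of_neg (not_le.1 h), neg_one_mul]
  exact_mod_cast (card_le_card hcover).trans card_biUnion_le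

lemma card_piFinset_signs (k : ℕ) :
    (Fintype.piFinset fun _ : Fin k => ({-1, 1} : Finset ℝ)).card = 2 ^ k := by
  rw [Fintype.card_piFinset, prod_const, card_pair (by norm_num), card_univ, Fintype.card_fin]

lemma abs_le_one_of_mem_piFinset_signs {k : ℕ} {σ : Fin k → ℝ}
    (hσ : σ ∈ Fintype.piFinset fun _ => ({-1, 1} : Finset ℝ)) (l : Fin k) : |σ l| ≤ 1 := by
  rcases mem_insert.1 (Fintype.mem_piFinset.1 hσ l) with h | h <;> simp_all

lemma tilt_exponent_le {Δ D D' ε : ℝ} (hD : D' ≤ (2 - ε) * D) :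
    -(Δ / D) * Δ + (Δ / D) ^ 2 * D' / 2 ≤ -ε * Δ ^ 2 / (2 * D) := by
  have hcD : (Δ / D) ^ 2 * D = Δ / D * Δ := by
    rcases eq_or_ne D 0 with h | h
    · simp [h]
    · rw [sq, mul_assoc, div_mul_cancel₀ Δ h]
  have : -ε * Δ ^ 2 / (2 * D) = -(Δ / D) * Δ + (Δ / D) ^ 2 * ((2 - ε) * D) / 2 := by
    linear_combination (-(2 - ε) / 2) * hcD
  nlinarith [mul_le_mul_of_nonneg_left hD (sq_nonneg (Δ / D))]

theorem concentration_bound_general (n N k : ℕ) (lam : Fin n → ℝ) (hlam : ∀ i, 0 ≤ lam i)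
    (nb : Fin (k + 1) → ℕ) (hmono : StrictMono nb)
    (β ν E Δ ε : ℝ) (hβ : 0 < β) (hΔ : 0 < Δ)
    (hc : ν + Δ / Dfun lam ν β < 0)
    (hD : Dfun lam (ν + Δ / Dfun lam ν β) β ≤ (2 - ε) * Dfun lam ν β) :
    ((((Omega n N).filter fun M =>
        energy lam M ≤ E ∧ Δ ≤ ∑ l, |(blockSum nb M l : ℝ) - psiBlock lam nb l ν β|).card : ℕ) : ℝ)
      ≤ 2 ^ k * zeta lam ν β * Real.exp (β * E - ν * N) *
          Real.exp (-ε * Δ ^ 2 / (2 * Dfun lam ν β)) := by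
  have hc0 : 0 ≤ Δ / Dfun lam ν β := div_nonneg hΔ.le (Dfun_nonneg lam ν β)
  have hζ : 0 ≤ zeta lam ν β := zeta_nonneg fun i => by nlinarith [mul_nonneg hβ.le (hlam i)]
  calc _ ≤ _ := card_filter_le_sum_card_filter_signs (Omega n N) (fun M => energy lam M ≤ E)
        (fun M l => (blockSum nb M l : ℝ) - psiBlock lam nb l ν β) Δ
    _ ≤ ∑ _σ ∈ Fintype.piFinset fun _ => ({-1, 1} : Finset ℝ),
          zeta lam ν β * exp (β * E - ν * N) * exp (-ε * Δ ^ 2 / (2 * Dfun lam ν β)) :=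
        sum_le_sum fun σ hσ => (card_filter_signed_block_deviation_le lam hlam hmono.monotone
          (abs_le_one_of_mem_piFinset_signs hσ) hβ.le hc0 hc).trans (by
            gcongr; exact tilt_exponent_le hD)
    _ = _ := by rw [sum_const, card_piFinset_signs, nsmul_eq_mul]; push_cast; ring

/-- Concentration estimate preceding relation (20), obtained from (16) with
`c = Δ / D(ν,β)` by a second-order Taylor expansion of `log ζ` in `ν`. -/
theorem concentration_bound (n N k : ℕ) (hk : 1 ≤ k) (lam : Fin n → ℝ) (hlam : ∀ i, 0 ≤ lam i)
    (nb : Fin (k + 1) → ℕ) (hmono : StrictMono nb) (h0 : nb 0 = 0) (hlast : nb (Fin.last k) = n)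
    (β ν E Δ ε : ℝ) (hβ : 0 < β) (hν : ν < 0) (hE : 0 ≤ E) (hΔ : 0 < Δ)
    (hε0 : 0 < ε) (hε1 : ε < 1)
    (hc : ν + Δ / Dfun lam ν β < 0)
    (hD : Dfun lam (ν + Δ / Dfun lam ν β) β ≤ (2 - ε) * Dfun lam ν β) :
    ((((Omega n N).filter fun M =>
        energy lam M ≤ E ∧ Δ ≤ ∑ l, |(blockSum nb M l : ℝ) - psiBlock lam nb l ν β|).card : ℕ) : ℝ)
      ≤ 2 ^ k * zeta lam ν β * Real.exp (β * E - ν * N) *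
          Real.exp (-ε * Δ ^ 2 / (2 * Dfun lam ν β)) :=
  concentration_bound_general n N k lam hlam nb hmono β ν E Δ ε hβ hΔ hc hD
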